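/- Let σ(r) = 4(1-e^{-r²/4})/r², fix r₀ ≥ 1, and let ν = σ(r₀). Then there exists C > 0 independent of r₀ such that |σ(r) - ν| ≥ C^{-1}(1+r)^{-4} for all r > 0 with |r - r₀| ≥ 1/r₀. -/

import Mathlib

open Real

lemma exp_quad {t : ℝ} (ht : 0 ≤ t) : 1 + t + t^2/4 ≤ Real.exp t := by
  have h1 : 1 + t/2 ≤ Real.exp (t/2) := by
    have := Real.add_one_le_exp (t/2); linarith
  have h2 : (1 + t/2)^2 ≤ (Real.exp (t/2))^2 := by
    apply pow_le_pow_left₀ (by linarith) h1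
  have h3 : (Real.exp (t/2))^2 = Real.exp t := by
    rw [← Real.exp_nat_mul]; congr 1; push_cast; ring
  nlinarith [h3 ▸ h2]

lemma psi_lb {t : ℝ} (ht : 0 < t) :
    t^2 / (32 * (1+t)^2) ≤ 1 - (1+t) * Real.exp (-t) := by
  have hX : 1 + t + t^2/4 ≤ Real.exp t := exp_quad ht.le
  have hE : Real.exp (-t) = (Real.exp t)⁻¹ := Real.exp_neg t
  have hXpos : (0:ℝ) < Real.exp t := Real.exp_pos t
  have h1t : (0:ℝ) < (1+t)^2 := by positivity
  rcases le_or_gt t 2 with h2 | h2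
  · have he2 : Real.exp (2:ℝ) ≤ 8 := by
      have h := Real.exp_one_lt_d9
      have h22 : Real.exp (2:ℝ) = Real.exp 1 * Real.exp 1 := by
        rw [← Real.exp_add]; norm_num
      nlinarith [Real.exp_pos (1:ℝ)]
    have hE8 : (1:ℝ)/8 ≤ Real.exp (-t) := by
      have hmm : Real.exp t ≤ 8 := (Real.exp_le_exp.2 (by linarith)).trans he2
      rw [hE, one_div]
      exact inv_anti₀ hXpos hmm
    have key : Real.exp (-t) * (t^2/4) ≤ 1 - (1+t) * Real.exp (-t) := by
      have heq : Real.exp (-t) * (Real.exp t - 1 - t) = 1 - (1+t) * Real.exp (-t) := by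
        rw [hE]; field_simp; ring
      rw [← heq]
      apply mul_le_mul_of_nonneg_left (by linarith) (Real.exp_pos _).le
    have h32 : t^2/32 ≤ Real.exp (-t) * (t^2/4) := by nlinarith [sq_nonneg t]
    have hfinal : t^2 / (32 * (1+t)^2) ≤ t^2/32 := by
      rw [div_le_div_iff₀ (by positivity) (by norm_num)]
      nlinarith [sq_nonneg t]
    linarith
  · have hnum : (1+t) * Real.exp (-t) ≤ 3/4 := by
      rw [hE, mul_inv_le_iff₀ hXpos]
      have h3 : t^2/4 ≥ (1+t)/3 := by nlinarith
      nlinarith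
    have : t^2 / (32 * (1+t)^2) ≤ 1/32 := by
      rw [div_le_div_iff₀ (by positivity) (by norm_num)]
      nlinarith
    linarith

noncomputable def phiO (t : ℝ) : ℝ := (1 - Real.exp (-t)) / t

lemma phiO_deriv {t : ℝ} (ht : t ≠ 0) :
    HasDerivAt phiO (((1+t) * Real.exp (-t) - 1) / t^2) t := by
  have h1 : HasDerivAt (fun x : ℝ => 1 - Real.exp (-x)) (Real.exp (-t)) t := by
    have := (Real.hasDerivAt_exp (-t)).comp t (hasDerivAt_neg t)
    have h := (hasDerivAt_const t (1:ℝ)).sub this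
    simp at h
    exact h
  have h2 : HasDerivAt (fun x : ℝ => x) 1 t := hasDerivAt_id t
  have := h1.div h2 ht
  exact this.congr_deriv (by ring)

lemma phiO_diff {u v : ℝ} (hu : 0 < u) (huv : u < v) :
    (v - u) / (32 * (1+v)^2) ≤ phiO u - phiO v := by
  obtain ⟨c, hc, hceq⟩ := exists_hasDerivAt_eq_slope phiO
      (fun x => ((1+x) * Real.exp (-x) - 1) / x^2) huv
      (by
        apply ContinuousOn.div
        · fun_prop
        · fun_prop
        · intro x hx; exact ne_of_gt (lt_of_lt_of_le hu hx.1))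
      (fun x hx => phiO_deriv (ne_of_gt (hu.trans hx.1)))
  have hcpos : 0 < c := hu.trans hc.1
  have hkey : (1:ℝ) / (32 * (1+c)^2) ≤ (1 - (1+c) * Real.exp (-c)) / c^2 := by
    rw [div_le_div_iff₀ (by positivity) (by positivity)]
    have := psi_lb hcpos
    rw [div_le_iff₀ (by positivity)] at this
    nlinarith
  have hmono : (1:ℝ) / (32 * (1+v)^2) ≤ 1 / (32 * (1+c)^2) := by
    apply div_le_div_of_nonneg_left (by norm_num) (by positivity)
    nlinarith [hc.2, hcpos]
  have hslope : (phiO v - phiO u) / (v - u) = ((1+c) * Real.exp (-c) - 1) / c^2 := hceq.symm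
  have hvu : 0 < v - u := by linarith
  have heq2 : (phiO u - phiO v) / (v - u) = (1 - (1+c) * Real.exp (-c)) / c^2 := by
    rw [show phiO u - phiO v = -(phiO v - phiO u) by ring,
        show (1 - (1+c) * Real.exp (-c)) = -((1+c) * Real.exp (-c) - 1) by ring,
        neg_div, neg_div, hslope]
  have h4 : (1:ℝ) / (32 * (1+v)^2) ≤ (phiO u - phiO v) / (v - u) := by
    rw [heq2]; exact hmono.trans hkey
  have h5 := (le_div_iff₀ hvu).mp h4
  calc (v-u)/(32*(1+v)^2) = 1/(32*(1+v)^2)*(v-u) := by ring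
    _ ≤ _ := h5

noncomputable def oseenSigma (r : ℝ) : ℝ := 4 * (1 - Real.exp (-r ^ 2 / 4)) / r ^ 2

lemma oseen_eq_phiO {r : ℝ} (hr : r ≠ 0) : oseenSigma r = phiO (r^2/4) := by
  unfold oseenSigma phiO
  rw [neg_div]
  field_simp

lemma sigma_diff {a b : ℝ} (ha : 0 < a) (hab : a < b) :
    (b - a) * (a + b) / (128 * (1+b)^4) ≤ oseenSigma a - oseenSigma b := by
  have hb : 0 < b := ha.trans hab
  have hu : 0 < a^2/4 := by positivity
  have huv : a^2/4 < b^2/4 := by nlinarith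
  have h := phiO_diff hu huv
  rw [oseen_eq_phiO ha.ne', oseen_eq_phiO hb.ne']
  refine le_trans ?_ h
  rw [div_le_div_iff₀ (by positivity) (by positivity)]
  have h1 : 1 + b^2/4 ≤ (1+b)^2 := by nlinarith
  have h2 : (1 + b^2/4)^2 ≤ (1+b)^4 := by nlinarith [sq_nonneg b, sq_nonneg (1+b)]
  have h3 : 0 ≤ (b - a) * (a + b) := by nlinarith
  nlinarith [mul_le_mul_of_nonneg_left h2 h3, sq_nonneg (1+b^2/4)]

theorem stmt_13 :
    ∃ C : ℝ, 0 < C ∧ ∀ r₀ : ℝ, 1 ≤ r₀ → ∀ r : ℝ, 0 < r → |r - r₀| ≥ 1 / r₀ →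
      |oseenSigma r - oseenSigma r₀| ≥ C⁻¹ * (1 + r)⁻¹ ^ 4 := by
  refine ⟨2048, by norm_num, fun r₀ hr₀ r hr habs => ?_⟩
  have hr₀pos : (0:ℝ) < r₀ := by linarith
  have hrpos1 : (0:ℝ) < 1 + r := by linarith
  have hRHS : (2048:ℝ)⁻¹ * (1 + r)⁻¹ ^ 4 = 1 / (2048 * (1+r)^4) := by
    field_simp
  rw [ge_iff_le, hRHS]
  have h16 : (1 + r₀)^4 ≤ 16 * (1+r)^4 → True := fun _ => trivial
  rcases lt_trichotomy r r₀ with hlt | heq | hgt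
  · -- r < r₀
    have hgap : 1/r₀ ≤ r₀ - r := by
      have : |r - r₀| = r₀ - r := by rw [abs_of_nonpos (by linarith)]; ring
      linarith [habs, this ▸ habs]
    rcases le_or_gt r₀ (r + 1) with hcase | hcase
    · -- r₀ ≤ r + 1
      have h := sigma_diff hr hlt
      have hprod : (1:ℝ) ≤ (r₀ - r) * (r + r₀) := by
        have := mul_le_mul hgap (show r₀ ≤ r + r₀ by linarith) (by linarith) (by linarith)
        rw [one_div, inv_mul_cancel₀ hr₀pos.ne'] at this
        linarith
      have hpow : (1 + r₀)^4 ≤ 16 * (1+r)^4 := by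
        have h1 : 1 + r₀ ≤ 2 * (1 + r) := by linarith
        have := pow_le_pow_left₀ (by linarith) h1 4
        nlinarith [pow_pos hrpos1 4]
      have hb : 1 / (2048 * (1+r)^4) ≤ (r₀ - r) * (r + r₀) / (128 * (1+r₀)^4) := by
        rw [div_le_div_iff₀ (by positivity) (by positivity)]
        nlinarith [pow_pos hrpos1 4, mul_le_mul_of_nonneg_left hpow
          (show (0:ℝ) ≤ (r₀ - r)*(r+r₀) by linarith)]
      calc 1 / (2048 * (1+r)^4) ≤ oseenSigma r - oseenSigma r₀ := by linarith
        _ ≤ |oseenSigma r - oseenSigma r₀| := le_abs_self _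
    · -- r + 1 < r₀
      have h1 := sigma_diff hr (show r < r + 1 by linarith)
      have h2 := sigma_diff (show (0:ℝ) < r + 1 by linarith) hcase
      have h2' : (0:ℝ) ≤ oseenSigma (r+1) - oseenSigma r₀ := by
        refine le_trans (div_nonneg (by nlinarith) (by positivity)) h2
      have hb : 1 / (2048 * (1+r)^4) ≤ (r + 1 - r) * (r + (r + 1)) / (128 * (1+(r+1))^4) := by
        rw [div_le_div_iff₀ (by positivity) (by positivity)]
        have hpow : (1 + (r+1))^4 ≤ 16 * (1+r)^4 := by
          have := pow_le_pow_left₀ (show (0:ℝ) ≤ 1+(r+1) by linarith)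
            (show 1+(r+1) ≤ 2*(1+r) by linarith) 4
          nlinarith [pow_pos hrpos1 4]
        nlinarith [pow_pos hrpos1 4, pow_pos (show (0:ℝ) < 1+(r+1) by linarith) 4,
          mul_le_mul_of_nonneg_left hpow (show (0:ℝ) ≤ 2*r+1 by linarith)]
      calc 1 / (2048 * (1+r)^4) ≤ oseenSigma r - oseenSigma (r+1) := le_trans hb h1
        _ ≤ oseenSigma r - oseenSigma r₀ := by linarith
        _ ≤ |oseenSigma r - oseenSigma r₀| := le_abs_self _
  · exfalso
    rw [heq, sub_self, abs_zero] at habs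
    have : (0:ℝ) < 1/r₀ := by positivity
    linarith
  · -- r₀ < r
    have hgap : 1/r₀ ≤ r - r₀ := by
      have : |r - r₀| = r - r₀ := abs_of_nonneg (by linarith)
      linarith [this ▸ habs]
    have h := sigma_diff hr₀pos hgt
    have hprod : (1:ℝ) ≤ (r - r₀) * (r₀ + r) := by
      have := mul_le_mul hgap (show r₀ ≤ r₀ + r by linarith) (by linarith) (by linarith)
      rw [one_div, inv_mul_cancel₀ hr₀pos.ne'] at this
      linarith
    have hb : 1 / (2048 * (1+r)^4) ≤ (r - r₀) * (r₀ + r) / (128 * (1+r)^4) := by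
      rw [div_le_div_iff₀ (by positivity) (by positivity)]
      nlinarith [pow_pos hrpos1 4]
    calc 1 / (2048 * (1+r)^4) ≤ oseenSigma r₀ - oseenSigma r := by linarith
      _ ≤ |oseenSigma r₀ - oseenSigma r| := le_abs_self _
      _ = |oseenSigma r - oseenSigma r₀| := abs_sub_comm _ _
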